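/- Let N ≥ 1, let A be an invertible antisymmetric 2N×2N complex matrix, and let u, v ∈ ℂ^{2N} be column vectors. Then the matrix A + u vᵀ − v uᵀ is antisymmetric and Pf(A + u vᵀ − v uᵀ) = Pf(A) · (1 + vᵀ A⁻¹ u). -/

import Mathlib

set_option linter.unusedSectionVars false


open scoped BigOperators
open Matrix

/-- The Pfaffian of a `2N × 2N` complex matrix:
`Pf(A) = (1/(2^N N!)) ∑_{σ ∈ S_{2N}} sign(σ) ∏_{p=1}^{N} A_{σ(2p−1),σ(2p)}`. -/
noncomputable def pfaffian {N : ℕ} (A : Matrix (Fin (2*N)) (Fin (2*N)) ℂ) : ℂ :=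
  (1 / ((2:ℂ)^N * (N.factorial : ℂ))) *
    ∑ σ : Equiv.Perm (Fin (2*N)),
      ((Equiv.Perm.sign σ : ℤ) : ℂ) *
        ∏ p : Fin N,
          A (σ ⟨2*(p:ℕ), by have := p.isLt; omega⟩)
            (σ ⟨2*(p:ℕ)+1, by have := p.isLt; omega⟩)

namespace PfR2
open Equiv Finset
variable {N : ℕ}

def ev (p : Fin N) : Fin (2*N) := ⟨2*(p:ℕ), by have := p.isLt; omega⟩
def od (p : Fin N) : Fin (2*N) := ⟨2*(p:ℕ)+1, by have := p.isLt; omega⟩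
lemma ev_injective : Function.Injective (ev (N := N)) := by
  intro p q h; have := congrArg Fin.val h; simp only [ev] at this; exact Fin.ext (by omega)
lemma od_injective : Function.Injective (od (N := N)) := by
  intro p q h; have := congrArg Fin.val h; simp only [od] at this; exact Fin.ext (by omega)
lemma ev_ne_od (p q : Fin N) : ev p ≠ od q := by
  intro h; have := congrArg Fin.val h; simp only [ev, od] at this; omega
lemma od_ne_ev (p q : Fin N) : od p ≠ ev q := fun h => ev_ne_od q p h.symm
lemma ev_ne_ev {p q : Fin N} (h : p ≠ q) : ev p ≠ ev q := fun h' => h (ev_injective h')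
lemma od_ne_od {p q : Fin N} (h : p ≠ q) : od p ≠ od q := fun h' => h (od_injective h')
noncomputable def sgn (σ : Perm (Fin (2*N))) : ℂ := ((Perm.sign σ : ℤ) : ℂ)
lemma sgn_mul (σ τ : Perm (Fin (2*N))) : sgn (σ * τ) = sgn σ * sgn τ := by simp [sgn]
lemma sgn_swap {x y : Fin (2*N)} (h : x ≠ y) : sgn (swap x y) = -1 := by
  simp [sgn, Perm.sign_swap h]
lemma sum_mulRight (π : Perm (Fin (2*N))) (F : Perm (Fin (2*N)) → ℂ) :
    ∑ σ : Perm (Fin (2*N)), F (σ * π) = ∑ σ : Perm (Fin (2*N)), F σ :=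
  Equiv.sum_comp (Equiv.mulRight π) F
lemma sum_mulLeft (π : Perm (Fin (2*N))) (F : Perm (Fin (2*N)) → ℂ) :
    ∑ σ : Perm (Fin (2*N)), F (π * σ) = ∑ σ : Perm (Fin (2*N)), F σ :=
  Equiv.sum_comp (Equiv.mulLeft π) F

variable [NeZero N]

lemma sum_slots (h : Fin (2*N) → ℂ) :
    ∑ s : Fin (2*N), h s = ∑ i : Fin N, (h (ev i) + h (od i)) := by
  have hinj : Function.Injective (fun x : Fin N × Bool => cond x.2 (od x.1) (ev x.1)) := by
    rintro ⟨p, b⟩ ⟨q, c⟩ hpq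
    cases b <;> cases c <;> simp only [cond_true, cond_false] at hpq
    · exact congrArg (·, false) (ev_injective hpq)
    · exact absurd hpq (ev_ne_od p q)
    · exact absurd hpq.symm (ev_ne_od q p)
    · exact congrArg (·, true) (od_injective hpq)
  have hbij : Function.Bijective (fun x : Fin N × Bool => cond x.2 (od x.1) (ev x.1)) :=
    (Fintype.bijective_iff_injective_and_card _).2 ⟨hinj, by simp [mul_comm]⟩
  rw [← Fintype.sum_bijective _ hbij (fun x => h (cond x.2 (od x.1) (ev x.1))) h
      (fun x => rfl), Fintype.sum_prod_type]
  refine Finset.sum_congr rfl fun i _ => ?_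
  rw [Fintype.sum_bool]
  simp [add_comm]


lemma prod_univ_split {i : Fin N} (hi : i ≠ 0) (f : Fin N → ℂ) :
    ∏ p : Fin N, f p = f 0 * (f i * ∏ p ∈ (univ.erase 0).erase i, f p) := by
  rw [← Finset.mul_prod_erase univ f (mem_univ 0),
      ← Finset.mul_prod_erase (univ.erase 0) f (Finset.mem_erase.2 ⟨hi, mem_univ i⟩)]

lemma prod_erase0_split {i : Fin N} (hi : i ≠ 0) (f : Fin N → ℂ) :
    ∏ p ∈ univ.erase 0, f p = f i * ∏ p ∈ (univ.erase 0).erase i, f p := by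
  rw [← Finset.mul_prod_erase (univ.erase 0) f (Finset.mem_erase.2 ⟨hi, mem_univ i⟩)]

lemma prod_erasei_split {i : Fin N} (hi : i ≠ 0) (f : Fin N → ℂ) :
    ∏ p ∈ univ.erase i, f p = f 0 * ∏ p ∈ (univ.erase 0).erase i, f p := by
  rw [Finset.erase_right_comm,
      ← Finset.mul_prod_erase (univ.erase i) f (Finset.mem_erase.2 ⟨Ne.symm hi, mem_univ 0⟩)]



lemma swap_pair (M : Matrix (Fin (2*N)) (Fin (2*N)) ℂ) {i : Fin N} (hi : i ≠ 0)
    (K : Fin (2*N) → Fin (2*N) → Fin (2*N) → Fin (2*N) → ℂ) :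
    ∑ σ : Perm (Fin (2*N)), sgn σ * K (σ (ev 0)) (σ (od 0)) (σ (ev i)) (σ (od i)) *
        ∏ p ∈ (univ.erase 0).erase i, M (σ (ev p)) (σ (od p))
  = ∑ σ : Perm (Fin (2*N)), sgn σ * K (σ (ev i)) (σ (od i)) (σ (ev 0)) (σ (od 0)) *
        ∏ p ∈ (univ.erase 0).erase i, M (σ (ev p)) (σ (od p)) := by
  set π : Perm (Fin (2*N)) := swap (ev 0) (ev i) * swap (od 0) (od i) with hπdef
  have hi' : (0 : Fin N) ≠ i := Ne.symm hi
  have hπ1 : π (ev 0) = ev i := by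
    rw [hπdef, Perm.mul_apply, swap_apply_of_ne_of_ne (ev_ne_od 0 0) (ev_ne_od 0 i),
      swap_apply_left]
  have hπ2 : π (od 0) = od i := by
    rw [hπdef, Perm.mul_apply, swap_apply_left,
      swap_apply_of_ne_of_ne (od_ne_ev i 0) (od_ne_ev i i)]
  have hπ3 : π (ev i) = ev 0 := by
    rw [hπdef, Perm.mul_apply, swap_apply_of_ne_of_ne (ev_ne_od i 0) (ev_ne_od i i),
      swap_apply_right]
  have hπ4 : π (od i) = od 0 := by
    rw [hπdef, Perm.mul_apply, swap_apply_right,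
      swap_apply_of_ne_of_ne (od_ne_ev 0 0) (od_ne_ev 0 i)]
  have hπp : ∀ p : Fin N, p ≠ 0 → p ≠ i → π (ev p) = ev p ∧ π (od p) = od p := by
    intro p h0 h1
    constructor
    · rw [hπdef, Perm.mul_apply, swap_apply_of_ne_of_ne (ev_ne_od p 0) (ev_ne_od p i),
        swap_apply_of_ne_of_ne (ev_ne_ev h0) (ev_ne_ev h1)]
    · rw [hπdef, Perm.mul_apply, swap_apply_of_ne_of_ne (od_ne_od h0) (od_ne_od h1),
        swap_apply_of_ne_of_ne (od_ne_ev p 0) (od_ne_ev p i)]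
  have hsgnπ : ∀ σ : Perm (Fin (2*N)), sgn (σ * π) = sgn σ := by
    intro σ
    rw [hπdef, ← mul_assoc, sgn_mul, sgn_mul, sgn_swap (ev_ne_ev hi'), sgn_swap (od_ne_od hi')]
    ring
  refine Eq.trans (sum_mulRight π (fun σ => sgn σ * K (σ (ev 0)) (σ (od 0)) (σ (ev i)) (σ (od i)) *
        ∏ p ∈ (univ.erase 0).erase i, M (σ (ev p)) (σ (od p)))).symm
    (Finset.sum_congr rfl fun σ _ => ?_)
  simp only [Perm.mul_apply]
  rw [show (σ * π) = σ * π from rfl]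
  have hprod : ∏ p ∈ (univ.erase 0).erase i, M (σ (π (ev p))) (σ (π (od p)))
      = ∏ p ∈ (univ.erase 0).erase i, M (σ (ev p)) (σ (od p)) := by
    refine Finset.prod_congr rfl fun p hp => ?_
    have h1 := Finset.mem_erase.1 hp
    have h2 := Finset.mem_erase.1 h1.2
    rw [(hπp p h2.1 h1.1).1, (hπp p h2.1 h1.1).2]
  rw [hsgnπ σ, hπ1, hπ2, hπ3, hπ4, hprod]


lemma swap_pair' (M : Matrix (Fin (2*N)) (Fin (2*N)) ℂ) {i : Fin N} (hi : i ≠ 0)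
    (K : Fin (2*N) → Fin (2*N) → Fin (2*N) → Fin (2*N) → ℂ) :
    ∑ σ : Perm (Fin (2*N)), sgn σ * K (σ (ev 0)) (σ (od 0)) (σ (ev i)) (σ (od i)) *
        ∏ p ∈ (univ.erase 0).erase i, M (σ (ev p)) (σ (od p))
  = ∑ σ : Perm (Fin (2*N)), sgn σ * K (σ (od i)) (σ (ev i)) (σ (od 0)) (σ (ev 0)) *
        ∏ p ∈ (univ.erase 0).erase i, M (σ (ev p)) (σ (od p)) := by
  set π : Perm (Fin (2*N)) := swap (ev 0) (od i) * swap (od 0) (ev i) with hπdef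
  have hi' : (0 : Fin N) ≠ i := Ne.symm hi
  have hπ1 : π (ev 0) = od i := by
    rw [hπdef, Perm.mul_apply, swap_apply_of_ne_of_ne (ev_ne_od 0 0) (ev_ne_ev hi'),
      swap_apply_left]
  have hπ2 : π (od 0) = ev i := by
    rw [hπdef, Perm.mul_apply, swap_apply_left,
      swap_apply_of_ne_of_ne (ev_ne_ev (Ne.symm hi')) (ev_ne_od i i)]
  have hπ3 : π (ev i) = od 0 := by
    rw [hπdef, Perm.mul_apply, swap_apply_right,
      swap_apply_of_ne_of_ne (od_ne_ev 0 0) (od_ne_od hi')]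
  have hπ4 : π (od i) = ev 0 := by
    rw [hπdef, Perm.mul_apply, swap_apply_of_ne_of_ne (od_ne_od (Ne.symm hi')) (od_ne_ev i i),
      swap_apply_right]
  have hπp : ∀ p : Fin N, p ≠ 0 → p ≠ i → π (ev p) = ev p ∧ π (od p) = od p := by
    intro p h0 h1
    constructor
    · rw [hπdef, Perm.mul_apply, swap_apply_of_ne_of_ne (ev_ne_od p 0) (ev_ne_ev h1),
        swap_apply_of_ne_of_ne (ev_ne_ev h0) (ev_ne_od p i)]
    · rw [hπdef, Perm.mul_apply, swap_apply_of_ne_of_ne (od_ne_od h0) (od_ne_ev p i),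
        swap_apply_of_ne_of_ne (od_ne_ev p 0) (od_ne_od h1)]
  have hsgnπ : ∀ σ : Perm (Fin (2*N)), sgn (σ * π) = sgn σ := by
    intro σ
    rw [hπdef, ← mul_assoc, sgn_mul, sgn_mul, sgn_swap (ev_ne_od 0 i), sgn_swap (od_ne_ev 0 i)]
    ring
  refine Eq.trans (sum_mulRight π (fun σ => sgn σ * K (σ (ev 0)) (σ (od 0)) (σ (ev i)) (σ (od i)) *
        ∏ p ∈ (univ.erase 0).erase i, M (σ (ev p)) (σ (od p)))).symm
    (Finset.sum_congr rfl fun σ _ => ?_)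
  simp only [Perm.mul_apply]
  have hprod : ∏ p ∈ (univ.erase 0).erase i, M (σ (π (ev p))) (σ (π (od p)))
      = ∏ p ∈ (univ.erase 0).erase i, M (σ (ev p)) (σ (od p)) := by
    refine Finset.prod_congr rfl fun p hp => ?_
    have h1 := Finset.mem_erase.1 hp
    have h2 := Finset.mem_erase.1 h1.2
    rw [(hπp p h2.1 h1.1).1, (hπp p h2.1 h1.1).2]
  rw [hsgnπ σ, hπ1, hπ2, hπ3, hπ4, hprod]

lemma swap_zo (M : Matrix (Fin (2*N)) (Fin (2*N)) ℂ)
    (K : Fin (2*N) → Fin (2*N) → ℂ) :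
    ∑ σ : Perm (Fin (2*N)), sgn σ * K (σ (ev 0)) (σ (od 0)) *
        ∏ p ∈ univ.erase 0, M (σ (ev p)) (σ (od p))
  = -∑ σ : Perm (Fin (2*N)), sgn σ * K (σ (od 0)) (σ (ev 0)) *
        ∏ p ∈ univ.erase 0, M (σ (ev p)) (σ (od p)) := by
  set π : Perm (Fin (2*N)) := swap (ev 0) (od 0) with hπdef
  have hπp : ∀ p : Fin N, p ≠ 0 → π (ev p) = ev p ∧ π (od p) = od p := by
    intro p h0
    constructor
    · rw [hπdef, swap_apply_of_ne_of_ne (ev_ne_ev h0) (ev_ne_od p 0)]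
    · rw [hπdef, swap_apply_of_ne_of_ne (od_ne_ev p 0) (od_ne_od h0)]
  refine Eq.trans (sum_mulRight π (fun σ => sgn σ * K (σ (ev 0)) (σ (od 0)) *
        ∏ p ∈ univ.erase 0, M (σ (ev p)) (σ (od p)))).symm ?_
  rw [← Finset.sum_neg_distrib]
  refine Finset.sum_congr rfl fun σ _ => ?_
  simp only [Perm.mul_apply]
  have hprod : ∏ p ∈ univ.erase 0, M (σ (π (ev p))) (σ (π (od p)))
      = ∏ p ∈ univ.erase 0, M (σ (ev p)) (σ (od p)) := by
    refine Finset.prod_congr rfl fun p hp => ?_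
    have h1 := Finset.mem_erase.1 hp
    rw [(hπp p h1.1).1, (hπp p h1.1).2]
  rw [show sgn (σ * π) = -sgn σ by rw [hπdef, sgn_mul, sgn_swap (ev_ne_od 0 0)]; ring]
  rw [hπdef] at hprod ⊢
  rw [swap_apply_left, swap_apply_right, hprod]
  ring


lemma Mskew {M : Matrix (Fin (2*N)) (Fin (2*N)) ℂ} (hM : Mᵀ = -M) (x y : Fin (2*N)) :
    M x y = -M y x := by
  have := congrFun (congrFun hM y) x
  simpa using this

lemma pf_dup_row (M : Matrix (Fin (2*N)) (Fin (2*N)) ℂ) {a b : Fin (2*N)} (hab : a ≠ b) :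
    ∑ σ : Perm (Fin (2*N)), sgn σ * ∏ p : Fin N,
      M (if σ (ev p) = a then b else σ (ev p)) (if σ (od p) = a then b else σ (od p)) = 0 := by
  have hswap : ∀ t : Fin (2*N),
      (if swap a b t = a then b else swap a b t) = (if t = a then b else t) := by
    intro t
    rcases eq_or_ne t a with rfl | hta
    · simp [swap_apply_left, Ne.symm hab]
    · rcases eq_or_ne t b with rfl | htb
      · simp [swap_apply_right, hta]
      · simp [swap_apply_of_ne_of_ne hta htb, hta]
  have h1 := sum_mulLeft (swap a b) (fun σ => sgn σ * ∏ p : Fin N,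
      M (if σ (ev p) = a then b else σ (ev p)) (if σ (od p) = a then b else σ (od p)))
  have h3 : (∑ σ : Perm (Fin (2*N)), sgn σ * ∏ p : Fin N,
      M (if σ (ev p) = a then b else σ (ev p)) (if σ (od p) = a then b else σ (od p)))
      = -∑ σ : Perm (Fin (2*N)), sgn σ * ∏ p : Fin N,
      M (if σ (ev p) = a then b else σ (ev p)) (if σ (od p) = a then b else σ (od p)) := by
    conv_lhs => rw [← h1]
    rw [← Finset.sum_neg_distrib]
    refine Finset.sum_congr rfl fun σ _ => ?_
    have hs : sgn (swap a b * σ) = -sgn σ := by rw [sgn_mul, sgn_swap hab]; ring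
    simp only [Perm.mul_apply, hswap, hs]
    exact (neg_mul _ _).trans (congrArg Neg.neg (congrArg _
      (Finset.prod_congr rfl fun p _ => congrArg₂ M (hswap _) (hswap _))))
  exact add_self_eq_zero.mp (by linear_combination h3)

lemma ind_total (σ : Perm (Fin (2*N))) (a : Fin (2*N)) :
    ∑ s : Fin (2*N), (if σ s = a then (1:ℂ) else 0) = 1 := by
  have h := Fintype.sum_equiv σ (fun s => if σ s = a then (1:ℂ) else 0)
      (fun t => if t = a then (1:ℂ) else 0) (fun s => rfl)
  rw [h, Finset.sum_ite_eq' univ a (fun _ => (1:ℂ)), if_pos (mem_univ a)]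


lemma ev_term (M : Matrix (Fin (2*N)) (Fin (2*N)) ℂ) (a b : Fin (2*N)) (i : Fin N) :
    (∑ σ : Perm (Fin (2*N)), (if σ (ev i) = a then (1:ℂ) else 0) * (sgn σ * ∏ p : Fin N,
      M (if σ (ev p) = a then b else σ (ev p)) (if σ (od p) = a then b else σ (od p))))
    = ∑ σ : Perm (Fin (2*N)), sgn σ * (if σ (ev i) = a then (1:ℂ) else 0) * M b (σ (od i)) *
        ∏ p ∈ univ.erase i, M (σ (ev p)) (σ (od p)) := by
  refine Finset.sum_congr rfl fun σ _ => ?_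
  by_cases h : σ (ev i) = a
  · have hodi : σ (od i) ≠ a := fun hc => od_ne_ev i i (σ.injective (hc.trans h.symm))
    have hfac : (∏ p : Fin N,
        M (if σ (ev p) = a then b else σ (ev p)) (if σ (od p) = a then b else σ (od p)))
        = M b (σ (od i)) * ∏ p ∈ univ.erase i, M (σ (ev p)) (σ (od p)) := by
      rw [← Finset.mul_prod_erase univ
        (fun p => M (if σ (ev p) = a then b else σ (ev p)) (if σ (od p) = a then b else σ (od p)))
        (mem_univ i)]
      rw [if_pos h, if_neg hodi]
      congr 1
      refine Finset.prod_congr rfl fun p hp => ?_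
      have hpi : p ≠ i := (Finset.mem_erase.1 hp).1
      have h1 : σ (ev p) ≠ a := fun hc => hpi (ev_injective (σ.injective (hc.trans h.symm)))
      have h2 : σ (od p) ≠ a := fun hc => od_ne_ev p i (σ.injective (hc.trans h.symm))
      rw [if_neg h1, if_neg h2]
    rw [hfac]
    ring
  · rw [if_neg h]
    ring

lemma od_term (M : Matrix (Fin (2*N)) (Fin (2*N)) ℂ) (a b : Fin (2*N)) (i : Fin N) :
    (∑ σ : Perm (Fin (2*N)), (if σ (od i) = a then (1:ℂ) else 0) * (sgn σ * ∏ p : Fin N,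
      M (if σ (ev p) = a then b else σ (ev p)) (if σ (od p) = a then b else σ (od p))))
    = ∑ σ : Perm (Fin (2*N)), sgn σ * (if σ (od i) = a then (1:ℂ) else 0) * M (σ (ev i)) b *
        ∏ p ∈ univ.erase i, M (σ (ev p)) (σ (od p)) := by
  refine Finset.sum_congr rfl fun σ _ => ?_
  by_cases h : σ (od i) = a
  · have hevi : σ (ev i) ≠ a := fun hc => ev_ne_od i i (σ.injective (hc.trans h.symm))
    have hfac : (∏ p : Fin N,
        M (if σ (ev p) = a then b else σ (ev p)) (if σ (od p) = a then b else σ (od p)))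
        = M (σ (ev i)) b * ∏ p ∈ univ.erase i, M (σ (ev p)) (σ (od p)) := by
      rw [← Finset.mul_prod_erase univ
        (fun p => M (if σ (ev p) = a then b else σ (ev p)) (if σ (od p) = a then b else σ (od p)))
        (mem_univ i)]
      rw [if_pos h, if_neg hevi]
      congr 1
      refine Finset.prod_congr rfl fun p hp => ?_
      have hpi : p ≠ i := (Finset.mem_erase.1 hp).1
      have h1 : σ (ev p) ≠ a := fun hc => ev_ne_od p i (σ.injective (hc.trans h.symm))
      have h2 : σ (od p) ≠ a := fun hc => hpi (od_injective (σ.injective (hc.trans h.symm)))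
      rw [if_neg h1, if_neg h2]
    rw [hfac]
    ring
  · rw [if_neg h]
    ring

lemma trans_ev0 (M : Matrix (Fin (2*N)) (Fin (2*N)) ℂ) (hM : Mᵀ = -M) (a b : Fin (2*N)) :
    (∑ σ : Perm (Fin (2*N)), sgn σ * (if σ (ev 0) = a then (1:ℂ) else 0) * M b (σ (od 0)) *
        ∏ p ∈ univ.erase 0, M (σ (ev p)) (σ (od p)))
    = ∑ σ : Perm (Fin (2*N)), sgn σ * (if σ (od 0) = a then (1:ℂ) else 0) * M (σ (ev 0)) b *
        ∏ p ∈ univ.erase 0, M (σ (ev p)) (σ (od p)) := by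
  have h := swap_zo M (fun z o => (if z = a then (1:ℂ) else 0) * M b o)
  calc (∑ σ : Perm (Fin (2*N)), sgn σ * (if σ (ev 0) = a then (1:ℂ) else 0) * M b (σ (od 0)) *
        ∏ p ∈ univ.erase 0, M (σ (ev p)) (σ (od p)))
      = ∑ σ : Perm (Fin (2*N)), sgn σ * ((if σ (ev 0) = a then (1:ℂ) else 0) * M b (σ (od 0))) *
        ∏ p ∈ univ.erase 0, M (σ (ev p)) (σ (od p)) := by
        refine Finset.sum_congr rfl fun σ _ => by ring
    _ = -∑ σ : Perm (Fin (2*N)), sgn σ * ((if σ (od 0) = a then (1:ℂ) else 0) * M b (σ (ev 0))) *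
        ∏ p ∈ univ.erase 0, M (σ (ev p)) (σ (od p)) := h
    _ = _ := by
        rw [← Finset.sum_neg_distrib]
        refine Finset.sum_congr rfl fun σ _ => ?_
        rw [Mskew hM b (σ (ev 0))]
        ring

lemma trans_ev_i (M : Matrix (Fin (2*N)) (Fin (2*N)) ℂ) (hM : Mᵀ = -M) (a b : Fin (2*N))
    {i : Fin N} (hi : i ≠ 0) :
    (∑ σ : Perm (Fin (2*N)), sgn σ * (if σ (ev i) = a then (1:ℂ) else 0) * M b (σ (od i)) *
        ∏ p ∈ univ.erase i, M (σ (ev p)) (σ (od p)))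
    = ∑ σ : Perm (Fin (2*N)), sgn σ * (if σ (od 0) = a then (1:ℂ) else 0) * M (σ (ev 0)) b *
        ∏ p ∈ univ.erase 0, M (σ (ev p)) (σ (od p)) := by
  have h := swap_pair' M hi (fun z o x y => (if x = a then (1:ℂ) else 0) * M b y * M z o)
  calc (∑ σ : Perm (Fin (2*N)), sgn σ * (if σ (ev i) = a then (1:ℂ) else 0) * M b (σ (od i)) *
        ∏ p ∈ univ.erase i, M (σ (ev p)) (σ (od p)))
      = ∑ σ : Perm (Fin (2*N)), sgn σ *
          ((if σ (ev i) = a then (1:ℂ) else 0) * M b (σ (od i)) * M (σ (ev 0)) (σ (od 0))) *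
          ∏ p ∈ (univ.erase 0).erase i, M (σ (ev p)) (σ (od p)) := by
        refine Finset.sum_congr rfl fun σ _ => ?_
        rw [prod_erasei_split hi (fun p => M (σ (ev p)) (σ (od p)))]
        ring
    _ = ∑ σ : Perm (Fin (2*N)), sgn σ *
          ((if σ (od 0) = a then (1:ℂ) else 0) * M b (σ (ev 0)) * M (σ (od i)) (σ (ev i))) *
          ∏ p ∈ (univ.erase 0).erase i, M (σ (ev p)) (σ (od p)) := h
    _ = _ := by
        refine Finset.sum_congr rfl fun σ _ => ?_
        rw [prod_erase0_split hi (fun p => M (σ (ev p)) (σ (od p))),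
          Mskew hM b (σ (ev 0)), Mskew hM (σ (od i)) (σ (ev i))]
        ring

lemma trans_od_i (M : Matrix (Fin (2*N)) (Fin (2*N)) ℂ) (a b : Fin (2*N))
    {i : Fin N} (hi : i ≠ 0) :
    (∑ σ : Perm (Fin (2*N)), sgn σ * (if σ (od i) = a then (1:ℂ) else 0) * M (σ (ev i)) b *
        ∏ p ∈ univ.erase i, M (σ (ev p)) (σ (od p)))
    = ∑ σ : Perm (Fin (2*N)), sgn σ * (if σ (od 0) = a then (1:ℂ) else 0) * M (σ (ev 0)) b *
        ∏ p ∈ univ.erase 0, M (σ (ev p)) (σ (od p)) := by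
  have h := swap_pair M hi (fun z o x y => (if y = a then (1:ℂ) else 0) * M x b * M z o)
  calc (∑ σ : Perm (Fin (2*N)), sgn σ * (if σ (od i) = a then (1:ℂ) else 0) * M (σ (ev i)) b *
        ∏ p ∈ univ.erase i, M (σ (ev p)) (σ (od p)))
      = ∑ σ : Perm (Fin (2*N)), sgn σ *
          ((if σ (od i) = a then (1:ℂ) else 0) * M (σ (ev i)) b * M (σ (ev 0)) (σ (od 0))) *
          ∏ p ∈ (univ.erase 0).erase i, M (σ (ev p)) (σ (od p)) := by
        refine Finset.sum_congr rfl fun σ _ => ?_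
        rw [prod_erasei_split hi (fun p => M (σ (ev p)) (σ (od p)))]
        ring
    _ = ∑ σ : Perm (Fin (2*N)), sgn σ *
          ((if σ (od 0) = a then (1:ℂ) else 0) * M (σ (ev 0)) b * M (σ (ev i)) (σ (od i))) *
          ∏ p ∈ (univ.erase 0).erase i, M (σ (ev p)) (σ (od p)) := h
    _ = _ := by
        refine Finset.sum_congr rfl fun σ _ => ?_
        rw [prod_erase0_split hi (fun p => M (σ (ev p)) (σ (od p)))]
        ring

lemma Pprime_eq_zero (M : Matrix (Fin (2*N)) (Fin (2*N)) ℂ) (hM : Mᵀ = -M)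
    {a b : Fin (2*N)} (hab : a ≠ b) :
    ∑ σ : Perm (Fin (2*N)), sgn σ * (if σ (od 0) = a then (1:ℂ) else 0) * M (σ (ev 0)) b *
        ∏ p ∈ univ.erase 0, M (σ (ev p)) (σ (od p)) = 0 := by
  have hZ := pf_dup_row M hab
  have hsplit : (∑ σ : Perm (Fin (2*N)), sgn σ * ∏ p : Fin N,
      M (if σ (ev p) = a then b else σ (ev p)) (if σ (od p) = a then b else σ (od p)))
      = ∑ i : Fin N,
        ((∑ σ : Perm (Fin (2*N)), (if σ (ev i) = a then (1:ℂ) else 0) * (sgn σ * ∏ p : Fin N,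
          M (if σ (ev p) = a then b else σ (ev p)) (if σ (od p) = a then b else σ (od p)))) +
         (∑ σ : Perm (Fin (2*N)), (if σ (od i) = a then (1:ℂ) else 0) * (sgn σ * ∏ p : Fin N,
          M (if σ (ev p) = a then b else σ (ev p)) (if σ (od p) = a then b else σ (od p))))) := by
    calc (∑ σ : Perm (Fin (2*N)), sgn σ * ∏ p : Fin N,
      M (if σ (ev p) = a then b else σ (ev p)) (if σ (od p) = a then b else σ (od p)))
        = ∑ σ : Perm (Fin (2*N)), ∑ s : Fin (2*N),
            (if σ s = a then (1:ℂ) else 0) * (sgn σ * ∏ p : Fin N,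
            M (if σ (ev p) = a then b else σ (ev p)) (if σ (od p) = a then b else σ (od p))) := by
          refine Finset.sum_congr rfl fun σ _ => ?_
          rw [← Finset.sum_mul, ind_total σ a, one_mul]
      _ = ∑ s : Fin (2*N), ∑ σ : Perm (Fin (2*N)),
            (if σ s = a then (1:ℂ) else 0) * (sgn σ * ∏ p : Fin N,
            M (if σ (ev p) = a then b else σ (ev p)) (if σ (od p) = a then b else σ (od p))) :=
          Finset.sum_comm
      _ = _ := sum_slots _
  have hPa : ∀ i : Fin N,
      (∑ σ : Perm (Fin (2*N)), (if σ (ev i) = a then (1:ℂ) else 0) * (sgn σ * ∏ p : Fin N,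
        M (if σ (ev p) = a then b else σ (ev p)) (if σ (od p) = a then b else σ (od p))))
      = ∑ σ : Perm (Fin (2*N)), sgn σ * (if σ (od 0) = a then (1:ℂ) else 0) * M (σ (ev 0)) b *
        ∏ p ∈ univ.erase 0, M (σ (ev p)) (σ (od p)) := by
    intro i
    rcases eq_or_ne i 0 with rfl | hi
    · rw [ev_term M a b 0, trans_ev0 M hM a b]
    · rw [ev_term M a b i, trans_ev_i M hM a b hi]
  have hPb : ∀ i : Fin N,
      (∑ σ : Perm (Fin (2*N)), (if σ (od i) = a then (1:ℂ) else 0) * (sgn σ * ∏ p : Fin N,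
        M (if σ (ev p) = a then b else σ (ev p)) (if σ (od p) = a then b else σ (od p))))
      = ∑ σ : Perm (Fin (2*N)), sgn σ * (if σ (od 0) = a then (1:ℂ) else 0) * M (σ (ev 0)) b *
        ∏ p ∈ univ.erase 0, M (σ (ev p)) (σ (od p)) := by
    intro i
    rcases eq_or_ne i 0 with rfl | hi
    · rw [od_term M a b 0]
    · rw [od_term M a b i, trans_od_i M a b hi]
  rw [hsplit] at hZ
  rw [Finset.sum_congr rfl (fun i _ => by rw [hPa i, hPb i])] at hZ
  rw [Finset.sum_const, card_univ, Fintype.card_fin, nsmul_eq_mul] at hZ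
  have hN : (N : ℂ) ≠ 0 := Nat.cast_ne_zero.2 (NeZero.ne N)
  have h2 := mul_eq_zero.1 hZ
  rcases h2 with h2 | h2
  · exact absurd h2 hN
  · linear_combination h2 / 2


lemma W_ev (M : Matrix (Fin (2*N)) (Fin (2*N)) ℂ) (a : Fin (2*N)) (i : Fin N) :
    (∑ σ : Perm (Fin (2*N)), (if σ (ev i) = a then (1:ℂ) else 0) *
        (sgn σ * ∏ p : Fin N, M (σ (ev p)) (σ (od p))))
    = ∑ σ : Perm (Fin (2*N)), (if σ (ev 0) = a then (1:ℂ) else 0) *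
        (sgn σ * ∏ p : Fin N, M (σ (ev p)) (σ (od p))) := by
  rcases eq_or_ne i 0 with rfl | hi
  · rfl
  · have h := swap_pair M hi
      (fun z o x y => (if x = a then (1:ℂ) else 0) * (M z o * M x y))
    calc (∑ σ : Perm (Fin (2*N)), (if σ (ev i) = a then (1:ℂ) else 0) *
        (sgn σ * ∏ p : Fin N, M (σ (ev p)) (σ (od p))))
        = ∑ σ : Perm (Fin (2*N)), sgn σ *
            ((if σ (ev i) = a then (1:ℂ) else 0) * (M (σ (ev 0)) (σ (od 0)) * M (σ (ev i)) (σ (od i)))) *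
            ∏ p ∈ (univ.erase 0).erase i, M (σ (ev p)) (σ (od p)) := by
          refine Finset.sum_congr rfl fun σ _ => ?_
          rw [prod_univ_split hi (fun p => M (σ (ev p)) (σ (od p)))]
          ring
      _ = ∑ σ : Perm (Fin (2*N)), sgn σ *
            ((if σ (ev 0) = a then (1:ℂ) else 0) * (M (σ (ev i)) (σ (od i)) * M (σ (ev 0)) (σ (od 0)))) *
            ∏ p ∈ (univ.erase 0).erase i, M (σ (ev p)) (σ (od p)) := h
      _ = _ := by
          refine Finset.sum_congr rfl fun σ _ => ?_
          rw [prod_univ_split hi (fun p => M (σ (ev p)) (σ (od p)))]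
          ring

lemma W_od (M : Matrix (Fin (2*N)) (Fin (2*N)) ℂ) (hM : Mᵀ = -M) (a : Fin (2*N)) (i : Fin N) :
    (∑ σ : Perm (Fin (2*N)), (if σ (od i) = a then (1:ℂ) else 0) *
        (sgn σ * ∏ p : Fin N, M (σ (ev p)) (σ (od p))))
    = ∑ σ : Perm (Fin (2*N)), (if σ (ev 0) = a then (1:ℂ) else 0) *
        (sgn σ * ∏ p : Fin N, M (σ (ev p)) (σ (od p))) := by
  rcases eq_or_ne i 0 with rfl | hi
  · have h := swap_zo M (fun z o => (if o = a then (1:ℂ) else 0) * M z o)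
    calc (∑ σ : Perm (Fin (2*N)), (if σ (od 0) = a then (1:ℂ) else 0) *
        (sgn σ * ∏ p : Fin N, M (σ (ev p)) (σ (od p))))
        = ∑ σ : Perm (Fin (2*N)), sgn σ *
            ((if σ (od 0) = a then (1:ℂ) else 0) * M (σ (ev 0)) (σ (od 0))) *
            ∏ p ∈ univ.erase 0, M (σ (ev p)) (σ (od p)) := by
          refine Finset.sum_congr rfl fun σ _ => ?_
          rw [← Finset.mul_prod_erase univ (fun p => M (σ (ev p)) (σ (od p))) (mem_univ 0)]
          ring
      _ = -∑ σ : Perm (Fin (2*N)), sgn σ *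
            ((if σ (ev 0) = a then (1:ℂ) else 0) * M (σ (od 0)) (σ (ev 0))) *
            ∏ p ∈ univ.erase 0, M (σ (ev p)) (σ (od p)) := h
      _ = _ := by
          rw [← Finset.sum_neg_distrib]
          refine Finset.sum_congr rfl fun σ _ => ?_
          rw [Mskew hM (σ (od 0)) (σ (ev 0)),
            ← Finset.mul_prod_erase univ (fun p => M (σ (ev p)) (σ (od p))) (mem_univ 0)]
          ring
  · have h := swap_pair' M hi
      (fun z o x y => (if z = a then (1:ℂ) else 0) * (M z o * M x y))
    refine Eq.symm ?_
    calc (∑ σ : Perm (Fin (2*N)), (if σ (ev 0) = a then (1:ℂ) else 0) *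
        (sgn σ * ∏ p : Fin N, M (σ (ev p)) (σ (od p))))
        = ∑ σ : Perm (Fin (2*N)), sgn σ *
            ((if σ (ev 0) = a then (1:ℂ) else 0) * (M (σ (ev 0)) (σ (od 0)) * M (σ (ev i)) (σ (od i)))) *
            ∏ p ∈ (univ.erase 0).erase i, M (σ (ev p)) (σ (od p)) := by
          refine Finset.sum_congr rfl fun σ _ => ?_
          rw [prod_univ_split hi (fun p => M (σ (ev p)) (σ (od p)))]
          ring
      _ = ∑ σ : Perm (Fin (2*N)), sgn σ *
            ((if σ (od i) = a then (1:ℂ) else 0) * (M (σ (od i)) (σ (ev i)) * M (σ (od 0)) (σ (ev 0)))) *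
            ∏ p ∈ (univ.erase 0).erase i, M (σ (ev p)) (σ (od p)) := h
      _ = _ := by
          refine Finset.sum_congr rfl fun σ _ => ?_
          rw [Mskew hM (σ (od i)) (σ (ev i)), Mskew hM (σ (od 0)) (σ (ev 0)),
            prod_univ_split hi (fun p => M (σ (ev p)) (σ (od p)))]
          ring

lemma W_value (M : Matrix (Fin (2*N)) (Fin (2*N)) ℂ) (hM : Mᵀ = -M) (a : Fin (2*N)) :
    (2*(N:ℂ)) * (∑ σ : Perm (Fin (2*N)), (if σ (ev 0) = a then (1:ℂ) else 0) *
        (sgn σ * ∏ p : Fin N, M (σ (ev p)) (σ (od p))))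
    = ∑ σ : Perm (Fin (2*N)), sgn σ * ∏ p : Fin N, M (σ (ev p)) (σ (od p)) := by
  have hsplit : (∑ σ : Perm (Fin (2*N)), sgn σ * ∏ p : Fin N, M (σ (ev p)) (σ (od p)))
      = ∑ i : Fin N,
        ((∑ σ : Perm (Fin (2*N)), (if σ (ev i) = a then (1:ℂ) else 0) *
          (sgn σ * ∏ p : Fin N, M (σ (ev p)) (σ (od p)))) +
         (∑ σ : Perm (Fin (2*N)), (if σ (od i) = a then (1:ℂ) else 0) *
          (sgn σ * ∏ p : Fin N, M (σ (ev p)) (σ (od p))))) := by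
    calc (∑ σ : Perm (Fin (2*N)), sgn σ * ∏ p : Fin N, M (σ (ev p)) (σ (od p)))
        = ∑ σ : Perm (Fin (2*N)), ∑ s : Fin (2*N),
            (if σ s = a then (1:ℂ) else 0) * (sgn σ * ∏ p : Fin N, M (σ (ev p)) (σ (od p))) := by
          refine Finset.sum_congr rfl fun σ _ => ?_
          rw [← Finset.sum_mul, ind_total σ a, one_mul]
      _ = ∑ s : Fin (2*N), ∑ σ : Perm (Fin (2*N)),
            (if σ s = a then (1:ℂ) else 0) * (sgn σ * ∏ p : Fin N, M (σ (ev p)) (σ (od p))) :=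
          Finset.sum_comm
      _ = _ := sum_slots _
  have h2 : ∀ i : Fin N,
      ((∑ σ : Perm (Fin (2*N)), (if σ (ev i) = a then (1:ℂ) else 0) *
          (sgn σ * ∏ p : Fin N, M (σ (ev p)) (σ (od p)))) +
       (∑ σ : Perm (Fin (2*N)), (if σ (od i) = a then (1:ℂ) else 0) *
          (sgn σ * ∏ p : Fin N, M (σ (ev p)) (σ (od p)))))
      = 2 * ∑ σ : Perm (Fin (2*N)), (if σ (ev 0) = a then (1:ℂ) else 0) *
          (sgn σ * ∏ p : Fin N, M (σ (ev p)) (σ (od p))) := by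
    intro i
    rw [W_ev M a i, W_od M hM a i]
    ring
  rw [hsplit, Finset.sum_congr rfl (fun i (_ : i ∈ univ) => h2 i),
    Finset.sum_const, card_univ, Fintype.card_fin, nsmul_eq_mul]
  ring

lemma P_offdiag (M : Matrix (Fin (2*N)) (Fin (2*N)) ℂ) (hM : Mᵀ = -M)
    {a b : Fin (2*N)} (hab : a ≠ b) :
    ∑ σ : Perm (Fin (2*N)), sgn σ * (if σ (ev 0) = a then (1:ℂ) else 0) * M (σ (od 0)) b *
        ∏ p ∈ univ.erase 0, M (σ (ev p)) (σ (od p)) = 0 := by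
  have h := swap_zo M (fun z o => (if z = a then (1:ℂ) else 0) * M o b)
  calc (∑ σ : Perm (Fin (2*N)), sgn σ * (if σ (ev 0) = a then (1:ℂ) else 0) * M (σ (od 0)) b *
        ∏ p ∈ univ.erase 0, M (σ (ev p)) (σ (od p)))
      = ∑ σ : Perm (Fin (2*N)), sgn σ * ((if σ (ev 0) = a then (1:ℂ) else 0) * M (σ (od 0)) b) *
        ∏ p ∈ univ.erase 0, M (σ (ev p)) (σ (od p)) := by
        refine Finset.sum_congr rfl fun σ _ => by ring
    _ = -∑ σ : Perm (Fin (2*N)), sgn σ * ((if σ (od 0) = a then (1:ℂ) else 0) * M (σ (ev 0)) b) *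
        ∏ p ∈ univ.erase 0, M (σ (ev p)) (σ (od p)) := h
    _ = -∑ σ : Perm (Fin (2*N)), sgn σ * (if σ (od 0) = a then (1:ℂ) else 0) * M (σ (ev 0)) b *
        ∏ p ∈ univ.erase 0, M (σ (ev p)) (σ (od p)) := by
        rw [neg_inj]
        exact Finset.sum_congr rfl fun σ _ => by ring
    _ = 0 := by rw [Pprime_eq_zero M hM hab, neg_zero]

lemma P_diag (M : Matrix (Fin (2*N)) (Fin (2*N)) ℂ) (hM : Mᵀ = -M) (a : Fin (2*N)) :
    (2*(N:ℂ)) * (∑ σ : Perm (Fin (2*N)), sgn σ * (if σ (ev 0) = a then (1:ℂ) else 0) *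
        M (σ (od 0)) a * ∏ p ∈ univ.erase 0, M (σ (ev p)) (σ (od p)))
    = -∑ σ : Perm (Fin (2*N)), sgn σ * ∏ p : Fin N, M (σ (ev p)) (σ (od p)) := by
  have hstep : (∑ σ : Perm (Fin (2*N)), sgn σ * (if σ (ev 0) = a then (1:ℂ) else 0) *
        M (σ (od 0)) a * ∏ p ∈ univ.erase 0, M (σ (ev p)) (σ (od p)))
      = -∑ σ : Perm (Fin (2*N)), (if σ (ev 0) = a then (1:ℂ) else 0) *
        (sgn σ * ∏ p : Fin N, M (σ (ev p)) (σ (od p))) := by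
    rw [← Finset.sum_neg_distrib]
    refine Finset.sum_congr rfl fun σ _ => ?_
    by_cases h : σ (ev 0) = a
    · rw [if_pos h, ← h, Mskew hM (σ (od 0)) (σ (ev 0)),
        ← Finset.mul_prod_erase univ (fun p => M (σ (ev p)) (σ (od p))) (mem_univ 0)]
      ring
    · rw [if_neg h]
      ring
  rw [hstep]
  rw [mul_neg, W_value M hM a]


lemma plucker_vanish (M : Matrix (Fin (2*N)) (Fin (2*N)) ℂ) (u v : Fin (2*N) → ℂ)
    (S : Finset (Fin N)) {i j : Fin N} (hiS : i ∈ S) (hjS : j ∈ S) (hij : i ≠ j) :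
    ∑ σ : Perm (Fin (2*N)), sgn σ *
      (∏ p ∈ S, (u (σ (ev p)) * v (σ (od p)) - v (σ (ev p)) * u (σ (od p)))) *
      (∏ p ∈ univ \ S, M (σ (ev p)) (σ (od p))) = 0 := by
  set τ₁ : Perm (Fin (2*N)) := swap (od i) (ev j) with hτ₁
  set τ₂ : Perm (Fin (2*N)) := swap (od i) (od j) with hτ₂
  set F : Perm (Fin (2*N)) → ℂ := fun σ => sgn σ *
      (∏ p ∈ S, (u (σ (ev p)) * v (σ (od p)) - v (σ (ev p)) * u (σ (od p)))) *
      (∏ p ∈ univ \ S, M (σ (ev p)) (σ (od p))) with hF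
  have h1 := sum_mulRight τ₁ F
  have h2 := sum_mulRight τ₂ F
  have hw : ∀ (ρ : Perm (Fin (2*N))),
      (∏ p ∈ S, (u (ρ (ev p)) * v (ρ (od p)) - v (ρ (ev p)) * u (ρ (od p))))
      = (u (ρ (ev i)) * v (ρ (od i)) - v (ρ (ev i)) * u (ρ (od i))) *
        ((u (ρ (ev j)) * v (ρ (od j)) - v (ρ (ev j)) * u (ρ (od j))) *
         ∏ p ∈ (S.erase i).erase j,
           (u (ρ (ev p)) * v (ρ (od p)) - v (ρ (ev p)) * u (ρ (od p)))) := by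
    intro ρ
    rw [← Finset.mul_prod_erase S _ hiS,
        ← Finset.mul_prod_erase (S.erase i) _ (Finset.mem_erase.2 ⟨Ne.symm hij, hjS⟩)]
  have t1fix : ∀ p : Fin N, p ≠ i → p ≠ j → τ₁ (ev p) = ev p ∧ τ₁ (od p) = od p :=
    fun p hpi hpj => ⟨swap_apply_of_ne_of_ne (ev_ne_od p i) (ev_ne_ev hpj),
      swap_apply_of_ne_of_ne (od_ne_od hpi) (od_ne_ev p j)⟩
  have t2fix : ∀ p : Fin N, p ≠ i → p ≠ j → τ₂ (ev p) = ev p ∧ τ₂ (od p) = od p :=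
    fun p hpi hpj => ⟨swap_apply_of_ne_of_ne (ev_ne_od p i) (ev_ne_od p j),
      swap_apply_of_ne_of_ne (od_ne_od hpi) (od_ne_od hpj)⟩
  have hpt : ∀ σ : Perm (Fin (2*N)), F (σ * τ₁) + F (σ * τ₂) + F σ = 0 := by
    intro σ
    have e1 : (σ * τ₁) (ev i) = σ (ev i) := by
      rw [Perm.mul_apply, hτ₁, swap_apply_of_ne_of_ne (ev_ne_od i i) (ev_ne_ev hij)]
    have e2 : (σ * τ₁) (od i) = σ (ev j) := by rw [Perm.mul_apply, hτ₁, swap_apply_left]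
    have e3 : (σ * τ₁) (ev j) = σ (od i) := by rw [Perm.mul_apply, hτ₁, swap_apply_right]
    have e4 : (σ * τ₁) (od j) = σ (od j) := by
      rw [Perm.mul_apply, hτ₁, swap_apply_of_ne_of_ne (od_ne_od (Ne.symm hij)) (od_ne_ev j j)]
    have f1 : (σ * τ₂) (ev i) = σ (ev i) := by
      rw [Perm.mul_apply, hτ₂, swap_apply_of_ne_of_ne (ev_ne_od i i) (ev_ne_od i j)]
    have f2 : (σ * τ₂) (od i) = σ (od j) := by rw [Perm.mul_apply, hτ₂, swap_apply_left]
    have f3 : (σ * τ₂) (ev j) = σ (ev j) := by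
      rw [Perm.mul_apply, hτ₂, swap_apply_of_ne_of_ne (ev_ne_od j i) (ev_ne_od j j)]
    have f4 : (σ * τ₂) (od j) = σ (od i) := by rw [Perm.mul_apply, hτ₂, swap_apply_right]
    have c1 : (∏ p ∈ (S.erase i).erase j,
        (u ((σ * τ₁) (ev p)) * v ((σ * τ₁) (od p)) - v ((σ * τ₁) (ev p)) * u ((σ * τ₁) (od p))))
        = ∏ p ∈ (S.erase i).erase j,
        (u (σ (ev p)) * v (σ (od p)) - v (σ (ev p)) * u (σ (od p))) := by
      refine Finset.prod_congr rfl fun p hp => ?_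
      have hpj : p ≠ j := (Finset.mem_erase.1 hp).1
      have hpi : p ≠ i := (Finset.mem_erase.1 (Finset.mem_erase.1 hp).2).1
      rw [Perm.mul_apply, Perm.mul_apply, (t1fix p hpi hpj).1, (t1fix p hpi hpj).2]
    have c2 : (∏ p ∈ (S.erase i).erase j,
        (u ((σ * τ₂) (ev p)) * v ((σ * τ₂) (od p)) - v ((σ * τ₂) (ev p)) * u ((σ * τ₂) (od p))))
        = ∏ p ∈ (S.erase i).erase j,
        (u (σ (ev p)) * v (σ (od p)) - v (σ (ev p)) * u (σ (od p))) := by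
      refine Finset.prod_congr rfl fun p hp => ?_
      have hpj : p ≠ j := (Finset.mem_erase.1 hp).1
      have hpi : p ≠ i := (Finset.mem_erase.1 (Finset.mem_erase.1 hp).2).1
      rw [Perm.mul_apply, Perm.mul_apply, (t2fix p hpi hpj).1, (t2fix p hpi hpj).2]
    have c3 : (∏ p ∈ univ \ S, M ((σ * τ₁) (ev p)) ((σ * τ₁) (od p)))
        = ∏ p ∈ univ \ S, M (σ (ev p)) (σ (od p)) := by
      refine Finset.prod_congr rfl fun p hp => ?_
      have hpS : p ∉ S := (Finset.mem_sdiff.1 hp).2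
      have hpi : p ≠ i := fun h => hpS (h ▸ hiS)
      have hpj : p ≠ j := fun h => hpS (h ▸ hjS)
      rw [Perm.mul_apply, Perm.mul_apply, (t1fix p hpi hpj).1, (t1fix p hpi hpj).2]
    have c4 : (∏ p ∈ univ \ S, M ((σ * τ₂) (ev p)) ((σ * τ₂) (od p)))
        = ∏ p ∈ univ \ S, M (σ (ev p)) (σ (od p)) := by
      refine Finset.prod_congr rfl fun p hp => ?_
      have hpS : p ∉ S := (Finset.mem_sdiff.1 hp).2
      have hpi : p ≠ i := fun h => hpS (h ▸ hiS)
      have hpj : p ≠ j := fun h => hpS (h ▸ hjS)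
      rw [Perm.mul_apply, Perm.mul_apply, (t2fix p hpi hpj).1, (t2fix p hpi hpj).2]
    have hs1 : sgn (σ * τ₁) = -sgn σ := by rw [hτ₁, sgn_mul, sgn_swap (od_ne_ev i j)]; ring
    have hs2 : sgn (σ * τ₂) = -sgn σ := by rw [hτ₂, sgn_mul, sgn_swap (od_ne_od hij)]; ring
    rw [hF]
    simp only []
    rw [hw (σ * τ₁), hw (σ * τ₂), hw σ, c1, c2, c3, c4, hs1, hs2, e1, e2, e3, e4,
        f1, f2, f3, f4]
    ring
  have key : (∑ σ, F σ) + (∑ σ, F σ) + (∑ σ, F σ) = 0 := by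
    calc (∑ σ, F σ) + (∑ σ, F σ) + (∑ σ, F σ)
        = (∑ σ, F (σ * τ₁)) + (∑ σ, F (σ * τ₂)) + (∑ σ, F σ) := by rw [h1, h2]
      _ = ∑ σ, (F (σ * τ₁) + F (σ * τ₂) + F σ) := by
          rw [Finset.sum_add_distrib, Finset.sum_add_distrib]
      _ = 0 := by
          rw [Finset.sum_congr rfl (fun σ (_ : σ ∈ univ) => hpt σ), Finset.sum_const, smul_zero]
  linear_combination key / 3


lemma L_relabel (M : Matrix (Fin (2*N)) (Fin (2*N)) ℂ) (u v : Fin (2*N) → ℂ) (i : Fin N) :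
    (∑ σ : Perm (Fin (2*N)), sgn σ *
      (u (σ (ev i)) * v (σ (od i)) - v (σ (ev i)) * u (σ (od i))) *
      ∏ p ∈ univ.erase i, M (σ (ev p)) (σ (od p)))
    = ∑ σ : Perm (Fin (2*N)), sgn σ *
      (u (σ (ev 0)) * v (σ (od 0)) - v (σ (ev 0)) * u (σ (od 0))) *
      ∏ p ∈ univ.erase 0, M (σ (ev p)) (σ (od p)) := by
  rcases eq_or_ne i 0 with rfl | hi
  · rfl
  · have h := swap_pair M hi
      (fun z o x y => (u x * v y - v x * u y) * M z o)
    calc (∑ σ : Perm (Fin (2*N)), sgn σ *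
      (u (σ (ev i)) * v (σ (od i)) - v (σ (ev i)) * u (σ (od i))) *
      ∏ p ∈ univ.erase i, M (σ (ev p)) (σ (od p)))
        = ∑ σ : Perm (Fin (2*N)), sgn σ *
          ((u (σ (ev i)) * v (σ (od i)) - v (σ (ev i)) * u (σ (od i))) * M (σ (ev 0)) (σ (od 0))) *
          ∏ p ∈ (univ.erase 0).erase i, M (σ (ev p)) (σ (od p)) := by
          refine Finset.sum_congr rfl fun σ _ => ?_
          rw [prod_erasei_split hi (fun p => M (σ (ev p)) (σ (od p)))]
          ring
      _ = ∑ σ : Perm (Fin (2*N)), sgn σ *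
          ((u (σ (ev 0)) * v (σ (od 0)) - v (σ (ev 0)) * u (σ (od 0))) * M (σ (ev i)) (σ (od i))) *
          ∏ p ∈ (univ.erase 0).erase i, M (σ (ev p)) (σ (od p)) := h
      _ = _ := by
          refine Finset.sum_congr rfl fun σ _ => ?_
          rw [prod_erase0_split hi (fun p => M (σ (ev p)) (σ (od p)))]
          ring

lemma L0_value (M : Matrix (Fin (2*N)) (Fin (2*N)) ℂ) (hM : Mᵀ = -M) (u yv : Fin (2*N) → ℂ) :
    (2*(N:ℂ)) * (∑ σ : Perm (Fin (2*N)), sgn σ *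
      (u (σ (ev 0)) * (M *ᵥ yv) (σ (od 0))) *
      ∏ p ∈ univ.erase 0, M (σ (ev p)) (σ (od p)))
    = -(∑ σ : Perm (Fin (2*N)), sgn σ * ∏ p : Fin N, M (σ (ev p)) (σ (od p))) *
        ∑ x : Fin (2*N), u x * yv x := by
  have hstep : ∀ σ : Perm (Fin (2*N)), sgn σ *
      (u (σ (ev 0)) * (M *ᵥ yv) (σ (od 0))) *
      ∏ p ∈ univ.erase 0, M (σ (ev p)) (σ (od p))
      = ∑ a : Fin (2*N), ∑ b : Fin (2*N), (u a * yv b) *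
        (sgn σ * (if σ (ev 0) = a then (1:ℂ) else 0) *
          M (σ (od 0)) b * ∏ p ∈ univ.erase 0, M (σ (ev p)) (σ (od p))) := by
    intro σ
    have hv' : (∑ b : Fin (2*N), M (σ (od 0)) b * yv b) = (M *ᵥ yv) (σ (od 0)) := by
      simp [Matrix.mulVec, dotProduct]
    refine Eq.symm ?_
    have hinner : ∀ a : Fin (2*N),
        (∑ b : Fin (2*N), (u a * yv b) *
          (sgn σ * (if σ (ev 0) = a then (1:ℂ) else 0) *
            M (σ (od 0)) b * ∏ p ∈ univ.erase 0, M (σ (ev p)) (σ (od p))))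
        = (u a * (if σ (ev 0) = a then (1:ℂ) else 0)) *
          (sgn σ * (∏ p ∈ univ.erase 0, M (σ (ev p)) (σ (od p))) * (M *ᵥ yv) (σ (od 0))) := by
      intro a
      calc (∑ b : Fin (2*N), (u a * yv b) *
          (sgn σ * (if σ (ev 0) = a then (1:ℂ) else 0) *
            M (σ (od 0)) b * ∏ p ∈ univ.erase 0, M (σ (ev p)) (σ (od p))))
          = ∑ b : Fin (2*N), (u a * (if σ (ev 0) = a then (1:ℂ) else 0) *
              (sgn σ * ∏ p ∈ univ.erase 0, M (σ (ev p)) (σ (od p)))) *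
              (M (σ (od 0)) b * yv b) := by
            refine Finset.sum_congr rfl fun b _ => by ring
        _ = (u a * (if σ (ev 0) = a then (1:ℂ) else 0) *
              (sgn σ * ∏ p ∈ univ.erase 0, M (σ (ev p)) (σ (od p)))) *
              ∑ b : Fin (2*N), M (σ (od 0)) b * yv b := by
            rw [Finset.mul_sum]
        _ = _ := by rw [hv']; ring
    rw [Finset.sum_congr rfl (fun a (_ : a ∈ univ) => hinner a)]
    have houter : (∑ a : Fin (2*N), (u a * (if σ (ev 0) = a then (1:ℂ) else 0)) *
        (sgn σ * (∏ p ∈ univ.erase 0, M (σ (ev p)) (σ (od p))) * (M *ᵥ yv) (σ (od 0))))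
        = u (σ (ev 0)) *
          (sgn σ * (∏ p ∈ univ.erase 0, M (σ (ev p)) (σ (od p))) * (M *ᵥ yv) (σ (od 0))) := by
      rw [Finset.sum_congr rfl (fun a (_ : a ∈ univ) =>
        show (u a * (if σ (ev 0) = a then (1:ℂ) else 0)) *
            (sgn σ * (∏ p ∈ univ.erase 0, M (σ (ev p)) (σ (od p))) * (M *ᵥ yv) (σ (od 0)))
          = (if σ (ev 0) = a then u a *
              (sgn σ * (∏ p ∈ univ.erase 0, M (σ (ev p)) (σ (od p))) * (M *ᵥ yv) (σ (od 0)))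
            else 0) from by split_ifs <;> ring)]
      rw [Finset.sum_ite_eq univ (σ (ev 0))
        (fun a => u a * (sgn σ * (∏ p ∈ univ.erase 0, M (σ (ev p)) (σ (od p))) *
          (M *ᵥ yv) (σ (od 0)))), if_pos (mem_univ _)]
    rw [houter]
    ring
  rw [Finset.sum_congr rfl (fun σ (_ : σ ∈ univ) => hstep σ), Finset.sum_comm]
  rw [Finset.sum_congr rfl (fun a (_ : a ∈ univ) =>
    (Finset.sum_comm (s := (univ : Finset (Perm (Fin (2*N))))) (t := (univ : Finset (Fin (2*N))))))]
  have hfact : ∀ a b : Fin (2*N),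
      (∑ σ : Perm (Fin (2*N)), (u a * yv b) *
        (sgn σ * (if σ (ev 0) = a then (1:ℂ) else 0) *
          M (σ (od 0)) b * ∏ p ∈ univ.erase 0, M (σ (ev p)) (σ (od p))))
      = (u a * yv b) * (∑ σ : Perm (Fin (2*N)),
          sgn σ * (if σ (ev 0) = a then (1:ℂ) else 0) *
          M (σ (od 0)) b * ∏ p ∈ univ.erase 0, M (σ (ev p)) (σ (od p))) := by
    intro a b
    rw [Finset.mul_sum]
  rw [Finset.sum_congr rfl (fun a (_ : a ∈ univ) =>
    Finset.sum_congr rfl (fun b (_ : b ∈ univ) => hfact a b))]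
  have hdiag : ∀ a : Fin (2*N),
      (2*(N:ℂ)) * ∑ b : Fin (2*N), (u a * yv b) * (∑ σ : Perm (Fin (2*N)),
          sgn σ * (if σ (ev 0) = a then (1:ℂ) else 0) *
          M (σ (od 0)) b * ∏ p ∈ univ.erase 0, M (σ (ev p)) (σ (od p)))
      = (u a * yv a) *
        (-∑ σ : Perm (Fin (2*N)), sgn σ * ∏ p : Fin N, M (σ (ev p)) (σ (od p))) := by
    intro a
    have hsingle : (∑ b : Fin (2*N), (u a * yv b) * (∑ σ : Perm (Fin (2*N)),
          sgn σ * (if σ (ev 0) = a then (1:ℂ) else 0) *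
          M (σ (od 0)) b * ∏ p ∈ univ.erase 0, M (σ (ev p)) (σ (od p))))
        = (u a * yv a) * (∑ σ : Perm (Fin (2*N)),
          sgn σ * (if σ (ev 0) = a then (1:ℂ) else 0) *
          M (σ (od 0)) a * ∏ p ∈ univ.erase 0, M (σ (ev p)) (σ (od p))) := by
      refine Finset.sum_eq_single a (fun b _ hba => ?_) (fun h => absurd (mem_univ a) h)
      rw [P_offdiag M hM (Ne.symm hba), mul_zero]
    rw [hsingle]
    rw [show (2*(N:ℂ)) * ((u a * yv a) * (∑ σ : Perm (Fin (2*N)),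
          sgn σ * (if σ (ev 0) = a then (1:ℂ) else 0) *
          M (σ (od 0)) a * ∏ p ∈ univ.erase 0, M (σ (ev p)) (σ (od p))))
        = (u a * yv a) * ((2*(N:ℂ)) * (∑ σ : Perm (Fin (2*N)),
          sgn σ * (if σ (ev 0) = a then (1:ℂ) else 0) *
          M (σ (od 0)) a * ∏ p ∈ univ.erase 0, M (σ (ev p)) (σ (od p)))) from by ring]
    rw [P_diag M hM a]
  calc (2*(N:ℂ)) * ∑ a : Fin (2*N), ∑ b : Fin (2*N), (u a * yv b) *
        (∑ σ : Perm (Fin (2*N)), sgn σ * (if σ (ev 0) = a then (1:ℂ) else 0) *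
          M (σ (od 0)) b * ∏ p ∈ univ.erase 0, M (σ (ev p)) (σ (od p)))
      = ∑ a : Fin (2*N), (2*(N:ℂ)) * ∑ b : Fin (2*N), (u a * yv b) *
        (∑ σ : Perm (Fin (2*N)), sgn σ * (if σ (ev 0) = a then (1:ℂ) else 0) *
          M (σ (od 0)) b * ∏ p ∈ univ.erase 0, M (σ (ev p)) (σ (od p))) := by rw [Finset.mul_sum]
    _ = ∑ a : Fin (2*N), (u a * yv a) *
        (-∑ σ : Perm (Fin (2*N)), sgn σ * ∏ p : Fin N, M (σ (ev p)) (σ (od p))) :=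
        Finset.sum_congr rfl (fun a _ => hdiag a)
    _ = _ := by rw [← Finset.sum_mul]; ring


lemma L0_split (M : Matrix (Fin (2*N)) (Fin (2*N)) ℂ) (u v : Fin (2*N) → ℂ) :
    (∑ σ : Perm (Fin (2*N)), sgn σ *
      (u (σ (ev 0)) * v (σ (od 0)) - v (σ (ev 0)) * u (σ (od 0))) *
      ∏ p ∈ univ.erase 0, M (σ (ev p)) (σ (od p)))
    = 2 * ∑ σ : Perm (Fin (2*N)), sgn σ * (u (σ (ev 0)) * v (σ (od 0))) *
      ∏ p ∈ univ.erase 0, M (σ (ev p)) (σ (od p)) := by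
  have h := swap_zo M (fun z o => v z * u o)
  have hsplit : (∑ σ : Perm (Fin (2*N)), sgn σ *
      (u (σ (ev 0)) * v (σ (od 0)) - v (σ (ev 0)) * u (σ (od 0))) *
      ∏ p ∈ univ.erase 0, M (σ (ev p)) (σ (od p)))
      = (∑ σ : Perm (Fin (2*N)), sgn σ * (u (σ (ev 0)) * v (σ (od 0))) *
          ∏ p ∈ univ.erase 0, M (σ (ev p)) (σ (od p)))
        - ∑ σ : Perm (Fin (2*N)), sgn σ * (v (σ (ev 0)) * u (σ (od 0))) *
          ∏ p ∈ univ.erase 0, M (σ (ev p)) (σ (od p)) := by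
    rw [← Finset.sum_sub_distrib]
    exact Finset.sum_congr rfl fun σ _ => by ring
  rw [hsplit, h]
  have h2 : (∑ σ : Perm (Fin (2*N)), sgn σ * (v (σ (od 0)) * u (σ (ev 0))) *
      ∏ p ∈ univ.erase 0, M (σ (ev p)) (σ (od p)))
      = ∑ σ : Perm (Fin (2*N)), sgn σ * (u (σ (ev 0)) * v (σ (od 0))) *
      ∏ p ∈ univ.erase 0, M (σ (ev p)) (σ (od p)) :=
    Finset.sum_congr rfl fun σ _ => by ring
  rw [h2]
  ring

lemma pfSum_expand (M : Matrix (Fin (2*N)) (Fin (2*N)) ℂ) (u vv : Fin (2*N) → ℂ) :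
    (∑ σ : Perm (Fin (2*N)), sgn σ * ∏ p : Fin N,
      ((u (σ (ev p)) * vv (σ (od p)) - vv (σ (ev p)) * u (σ (od p))) + M (σ (ev p)) (σ (od p))))
    = (∑ σ : Perm (Fin (2*N)), sgn σ * ∏ p : Fin N, M (σ (ev p)) (σ (od p)))
      + (N:ℂ) * ∑ σ : Perm (Fin (2*N)), sgn σ *
          (u (σ (ev 0)) * vv (σ (od 0)) - vv (σ (ev 0)) * u (σ (od 0))) *
          ∏ p ∈ univ.erase 0, M (σ (ev p)) (σ (od p)) := by
  have h12 : (∑ σ : Perm (Fin (2*N)), sgn σ * ∏ p : Fin N,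
      ((u (σ (ev p)) * vv (σ (od p)) - vv (σ (ev p)) * u (σ (od p))) + M (σ (ev p)) (σ (od p))))
      = ∑ S ∈ (univ : Finset (Fin N)).powerset, ∑ σ : Perm (Fin (2*N)), sgn σ *
          (∏ p ∈ S, (u (σ (ev p)) * vv (σ (od p)) - vv (σ (ev p)) * u (σ (od p)))) *
          (∏ p ∈ univ \ S, M (σ (ev p)) (σ (od p))) := by
    calc (∑ σ : Perm (Fin (2*N)), sgn σ * ∏ p : Fin N,
      ((u (σ (ev p)) * vv (σ (od p)) - vv (σ (ev p)) * u (σ (od p))) + M (σ (ev p)) (σ (od p))))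
        = ∑ σ : Perm (Fin (2*N)), ∑ S ∈ (univ : Finset (Fin N)).powerset, sgn σ *
          (∏ p ∈ S, (u (σ (ev p)) * vv (σ (od p)) - vv (σ (ev p)) * u (σ (od p)))) *
          (∏ p ∈ univ \ S, M (σ (ev p)) (σ (od p))) := by
          refine Finset.sum_congr rfl fun σ _ => ?_
          rw [Finset.prod_add, Finset.mul_sum]
          exact Finset.sum_congr rfl fun S _ => by ring
      _ = _ := Finset.sum_comm
  have hvanish : ∀ S ∈ (univ : Finset (Fin N)).powerset,
      S ∉ insert (∅ : Finset (Fin N)) (univ.image fun i => ({i} : Finset (Fin N))) →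
      (∑ σ : Perm (Fin (2*N)), sgn σ *
          (∏ p ∈ S, (u (σ (ev p)) * vv (σ (od p)) - vv (σ (ev p)) * u (σ (od p)))) *
          (∏ p ∈ univ \ S, M (σ (ev p)) (σ (od p)))) = 0 := by
    intro S _ hS
    have hne : S ≠ ∅ := fun h => hS (by rw [h]; exact Finset.mem_insert_self _ _)
    have hns : ∀ i, S ≠ {i} := fun i h => hS (by
      rw [h]; exact Finset.mem_insert_of_mem (Finset.mem_image_of_mem _ (mem_univ i)))
    have hcard : 1 < S.card := by
      have c0 : S.card ≠ 0 := by simpa [Finset.card_eq_zero] using hne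
      have c1 : S.card ≠ 1 := fun h1 => by
        obtain ⟨i, hi⟩ := Finset.card_eq_one.1 h1
        exact hns i hi
      omega
    obtain ⟨i, hiS, j, hjS, hij⟩ := Finset.one_lt_card.1 hcard
    exact plucker_vanish M u vv S hiS hjS hij
  have hsub : insert (∅ : Finset (Fin N)) (univ.image fun i => ({i} : Finset (Fin N)))
      ⊆ (univ : Finset (Fin N)).powerset :=
    fun S _ => Finset.mem_powerset.2 (Finset.subset_univ S)
  rw [h12, ← Finset.sum_subset hsub hvanish]
  have hnotmem : (∅ : Finset (Fin N)) ∉ univ.image (fun i => ({i} : Finset (Fin N))) := by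
    simp
  rw [Finset.sum_insert hnotmem]
  rw [Finset.sum_image (fun i _ j _ h => Finset.singleton_injective h)]
  have hempty : (∑ σ : Perm (Fin (2*N)), sgn σ *
      (∏ p ∈ (∅ : Finset (Fin N)), (u (σ (ev p)) * vv (σ (od p)) - vv (σ (ev p)) * u (σ (od p)))) *
      (∏ p ∈ univ \ (∅ : Finset (Fin N)), M (σ (ev p)) (σ (od p))))
      = ∑ σ : Perm (Fin (2*N)), sgn σ * ∏ p : Fin N, M (σ (ev p)) (σ (od p)) := by
    refine Finset.sum_congr rfl fun σ _ => ?_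
    rw [Finset.prod_empty, Finset.sdiff_empty]
    ring
  have hsingle : ∀ i : Fin N, (∑ σ : Perm (Fin (2*N)), sgn σ *
      (∏ p ∈ ({i} : Finset (Fin N)),
        (u (σ (ev p)) * vv (σ (od p)) - vv (σ (ev p)) * u (σ (od p)))) *
      (∏ p ∈ univ \ ({i} : Finset (Fin N)), M (σ (ev p)) (σ (od p))))
      = ∑ σ : Perm (Fin (2*N)), sgn σ *
          (u (σ (ev 0)) * vv (σ (od 0)) - vv (σ (ev 0)) * u (σ (od 0))) *
          ∏ p ∈ univ.erase 0, M (σ (ev p)) (σ (od p)) := by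
    intro i
    rw [← L_relabel M u vv i]
    refine Finset.sum_congr rfl fun σ _ => ?_
    rw [Finset.prod_singleton, Finset.sdiff_singleton_eq_erase]
  rw [hempty, Finset.sum_congr rfl (fun i (_ : i ∈ univ) => hsingle i), Finset.sum_const,
    card_univ, Fintype.card_fin, nsmul_eq_mul]

lemma dot_skew (B : Matrix (Fin (2*N)) (Fin (2*N)) ℂ) (hB : Bᵀ = -B) (u v : Fin (2*N) → ℂ) :
    v ⬝ᵥ (B *ᵥ u) = -(u ⬝ᵥ (B *ᵥ v)) := by
  calc v ⬝ᵥ (B *ᵥ u) = ∑ x : Fin (2*N), ∑ b : Fin (2*N), v x * (B x b * u b) := by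
        simp [dotProduct, Matrix.mulVec, Finset.mul_sum]
    _ = ∑ b : Fin (2*N), ∑ x : Fin (2*N), v x * (B x b * u b) := Finset.sum_comm
    _ = ∑ b : Fin (2*N), ∑ x : Fin (2*N), -(u b * (B b x * v x)) := by
        refine Finset.sum_congr rfl fun b _ => Finset.sum_congr rfl fun x _ => ?_
        rw [Mskew hB x b]
        ring
    _ = -(u ⬝ᵥ (B *ᵥ v)) := by
        simp [dotProduct, Matrix.mulVec, Finset.mul_sum]

end PfR2

/-- Rank-two antisymmetric update of the Pfaffian: for invertible antisymmetric `A`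
and vectors `u, v`, the matrix `A + uvᵀ − vuᵀ` is antisymmetric and
`Pf(A + uvᵀ − vuᵀ) = Pf(A)·(1 + vᵀA⁻¹u)`. -/
theorem pfaffian_rank_two_update (N : ℕ) (hN : 1 ≤ N)
    (A : Matrix (Fin (2*N)) (Fin (2*N)) ℂ)
    (hA : IsUnit A.det) (hanti : Aᵀ = -A) (u v : Fin (2*N) → ℂ) :
    (A + vecMulVec u v - vecMulVec v u)ᵀ = -(A + vecMulVec u v - vecMulVec v u) ∧
    pfaffian (A + vecMulVec u v - vecMulVec v u)
      = pfaffian A * (1 + v ⬝ᵥ (A⁻¹ *ᵥ u)) := by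
  haveI : NeZero N := ⟨by omega⟩
  open PfR2 Equiv Finset in
  constructor
  · ext i j
    simp only [Matrix.transpose_apply, Matrix.add_apply, Matrix.sub_apply, Matrix.neg_apply,
      Matrix.vecMulVec_apply]
    rw [PfR2.Mskew hanti j i]
    ring
  · set y : Fin (2*N) → ℂ := A⁻¹ *ᵥ v with hy
    have hv : A *ᵥ y = v := by
      rw [hy, Matrix.mulVec_mulVec, Matrix.mul_nonsing_inv A hA, Matrix.one_mulVec]
    have hentry : (∑ σ : Equiv.Perm (Fin (2*N)), PfR2.sgn σ * ∏ p : Fin N,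
        (A + vecMulVec u v - vecMulVec v u) (σ (PfR2.ev p)) (σ (PfR2.od p)))
        = ∑ σ : Equiv.Perm (Fin (2*N)), PfR2.sgn σ * ∏ p : Fin N,
          ((u (σ (PfR2.ev p)) * v (σ (PfR2.od p)) - v (σ (PfR2.ev p)) * u (σ (PfR2.od p))) +
            A (σ (PfR2.ev p)) (σ (PfR2.od p))) := by
      refine Finset.sum_congr rfl fun σ _ => ?_
      congr 1
      refine Finset.prod_congr rfl fun p _ => ?_
      simp only [Matrix.add_apply, Matrix.sub_apply, Matrix.vecMulVec_apply]
      ring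
    have hexp := PfR2.pfSum_expand (N := N) A u v
    have hsplit2 := PfR2.L0_split (N := N) A u v
    have hval := PfR2.L0_value (N := N) A hanti u y
    rw [hv] at hval
    have hNne : (N:ℂ) ≠ 0 := Nat.cast_ne_zero.2 (NeZero.ne N)
    have hmain : (∑ σ : Equiv.Perm (Fin (2*N)), PfR2.sgn σ * ∏ p : Fin N,
        (A + vecMulVec u v - vecMulVec v u) (σ (PfR2.ev p)) (σ (PfR2.od p)))
        = (∑ σ : Equiv.Perm (Fin (2*N)), PfR2.sgn σ * ∏ p : Fin N,
            A (σ (PfR2.ev p)) (σ (PfR2.od p))) * (1 - ∑ x : Fin (2*N), u x * y x) := by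
      rw [hentry, hexp, hsplit2]
      have : (N:ℂ) * (2 * ∑ σ : Equiv.Perm (Fin (2*N)), PfR2.sgn σ *
          (u (σ (PfR2.ev 0)) * v (σ (PfR2.od 0))) *
          ∏ p ∈ Finset.univ.erase 0, A (σ (PfR2.ev p)) (σ (PfR2.od p)))
          = -(∑ σ : Equiv.Perm (Fin (2*N)), PfR2.sgn σ * ∏ p : Fin N,
              A (σ (PfR2.ev p)) (σ (PfR2.od p))) * ∑ x : Fin (2*N), u x * y x := by
        rw [← hval]
        ring
      rw [this]
      ring
    have hpf : pfaffian (A + vecMulVec u v - vecMulVec v u)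
        = (1 / ((2:ℂ)^N * (N.factorial : ℂ))) *
          ∑ σ : Equiv.Perm (Fin (2*N)), PfR2.sgn σ * ∏ p : Fin N,
            (A + vecMulVec u v - vecMulVec v u) (σ (PfR2.ev p)) (σ (PfR2.od p)) := rfl
    have hpfA : pfaffian A = (1 / ((2:ℂ)^N * (N.factorial : ℂ))) *
          ∑ σ : Equiv.Perm (Fin (2*N)), PfR2.sgn σ * ∏ p : Fin N,
            A (σ (PfR2.ev p)) (σ (PfR2.od p)) := rfl
    have hdot : v ⬝ᵥ (A⁻¹ *ᵥ u) = -(∑ x : Fin (2*N), u x * y x) := by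
      have hinvskew : (A⁻¹)ᵀ = -(A⁻¹) := by
        rw [Matrix.transpose_nonsing_inv, hanti]
        refine Matrix.inv_eq_right_inv ?_
        rw [Matrix.neg_mul, Matrix.mul_neg, neg_neg, Matrix.mul_nonsing_inv A hA]
      have h := PfR2.dot_skew (A⁻¹) hinvskew u v
      rw [h, hy]
      congr 1
    rw [hpf, hpfA, hmain, hdot]
    ring
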